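/- Let α be irrational with convergent denominators q_n, and for 0 ≤ n < m define r_{n,m}² = (q_m² − q_n²)/(δ_n − δ_m) where δ_k = 4 sin²(π‖q_k α‖). If n ≥ 1 (or n = 0 and α < 1/2) and a_{n+2} ≥ 2, then r_{n,n+1} < r_{n,m} for every m > n+1. -/

import Mathlib

open Real

/-- Iterates of the Gauss map starting at `α`:  `x₀ = α`, `x_{n+1} = frac (1 / xₙ)`. -/
noncomputable def cfX (α : ℝ) : ℕ → ℝ
  | 0 => α
  | n + 1 => Int.fract (1 / cfX α n)

/-- The `n`-th partial quotient `aₙ` (for `n ≥ 1`) of the continued fraction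
`α = [a₁, a₂, …]` of an irrational `α ∈ (0,1)`. -/
noncomputable def cfA (α : ℝ) (n : ℕ) : ℕ := ⌊1 / cfX α (n - 1)⌋₊

/-- Denominators `qₙ` of the rational convergents `pₙ/qₙ` of `α`:
`q₀ = 1`, `q₁ = a₁`, `q_{n+2} = a_{n+2} q_{n+1} + qₙ`. -/
noncomputable def cfQ (α : ℝ) : ℕ → ℕ
  | 0 => 1
  | 1 => cfA α 1
  | n + 2 => cfA α (n + 2) * cfQ α (n + 1) + cfQ α n

/-- Numerators `pₙ` of the rational convergents of `α`. -/
noncomputable def cfP (α : ℝ) : ℕ → ℕ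
  | 0 => 0
  | 1 => 1
  | n + 2 => cfA α (n + 2) * cfP α (n + 1) + cfP α n

/-- Distance from a real number to the nearest integer. -/
noncomputable def intDist (w : ℝ) : ℝ := |w - round w|

/-- `δₙ = 4 sin²(π ‖qₙ α‖)`. -/
noncomputable def cfDelta (α : ℝ) (n : ℕ) : ℝ :=
  4 * Real.sin (π * intDist ((cfQ α n : ℝ) * α)) ^ 2

/-- The crossing radius `r_{n,m} = √((q_m² − q_n²)/(δ_n − δ_m))`. -/
noncomputable def rCross (α : ℝ) (n m : ℕ) : ℝ :=
  Real.sqrt (((cfQ α m : ℝ) ^ 2 - (cfQ α n : ℝ) ^ 2) / (cfDelta α n - cfDelta α m))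

/-!
With `eₖ = |qₖ α − pₖ|`, the convergents give `q_{k+1} eₖ + qₖ e_{k+1} = 1` and
`eₖ = a_{k+2} e_{k+1} + e_{k+2}`. The first identity forces `eₙ < 1/2` as soon as `q_{n+1} ≥ 2`,
which is what the hypothesis on `n` provides; then `δₖ = 4 sin²(π eₖ)` for all `k ≥ n`. The second,
with `a_{n+2} ≥ 2`, gives `eₙ > 2 e_{n+1}`, hence `δₙ > 2 δ_{n+1}` because
`sin² 2t = 2 sin² t (1 + cos 2t) > 2 sin² t` for `0 < 2t < π/2`. So the denominator of `r²_{n,m}`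
is less than twice that of `r²_{n,n+1}`, while `q_m ≥ q_{n+2} > 2 q_{n+1}` makes its numerator more
than four times larger.
-/

lemma intDist_eq_abs_sub {x : ℝ} (k : ℤ) (h : |x - k| < 1 / 2) : intDist x = |x - k| := by
  have hround : round x = k := by
    obtain ⟨h₁, h₂⟩ := abs_lt.1 h
    exact round_eq_iff.2 ⟨by linarith, by linarith⟩
  rw [intDist, hround]

lemma sin_sq_lt_sin_sq {x y : ℝ} (hx : 0 ≤ x) (hxy : x < y) (hy : y ≤ π / 2) :
    sin x ^ 2 < sin y ^ 2 := by
  have hsin : sin x < sin y :=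
    sin_lt_sin_of_lt_of_le_pi_div_two (by linarith [pi_pos]) hy hxy
  exact pow_lt_pow_left₀ hsin (sin_nonneg_of_nonneg_of_le_pi hx (by linarith [pi_pos]))
    two_ne_zero

lemma two_mul_sin_sq_lt_sin_sq {t s : ℝ} (ht : 0 < t) (hts : 2 * t < s) (hs : s ≤ π / 2) :
    2 * sin t ^ 2 < sin s ^ 2 := by
  have hcos : 0 < cos (2 * t) := cos_pos_of_mem_Ioo ⟨by linarith [pi_pos], by linarith⟩
  have hsin : 0 < sin t := sin_pos_of_pos_of_lt_pi ht (by linarith [pi_pos])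
  have hdouble : sin (2 * t) ^ 2 = 2 * sin t ^ 2 * (1 + cos (2 * t)) := by
    rw [sin_two_mul, cos_two_mul]; ring
  calc 2 * sin t ^ 2 < sin (2 * t) ^ 2 := by rw [hdouble]; nlinarith [pow_pos hsin 2]
    _ < sin s ^ 2 := sin_sq_lt_sin_sq (by linarith) hts hs

lemma sqrt_div_lt_sqrt_div {k a b c d : ℝ} (hk : 0 < k) (ha : 0 ≤ a) (hac : k * a < c)
    (hdb : d ≤ k * b) (hd : 0 < d) : √(a / b) < √(c / d) := by
  have hb : 0 < b := pos_of_mul_pos_right (hd.trans_le hdb) hk.le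
  refine sqrt_lt_sqrt (div_nonneg ha hb.le) ?_
  calc a / b = k * a / (k * b) := (mul_div_mul_left a b hk.ne').symm
    _ < c / d := div_lt_div₀ hac hdb (by nlinarith) hd

lemma cfX_succ {α : ℝ} {n : ℕ} (h : 0 ≤ cfX α n) :
    cfX α (n + 1) = 1 / cfX α n - cfA α (n + 1) := by
  rw [cfX, cfA, Nat.add_sub_cancel, natCast_floor_eq_intCast_floor (by positivity),
    Int.fract]

lemma irrational_cfX {α : ℝ} (hirr : Irrational α) (n : ℕ) : Irrational (cfX α n) := by
  induction n with
  | zero => exact hirr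
  | succ n ih =>
    rw [cfX, Int.fract, one_div]
    exact ih.inv.sub_intCast _

/-- The sign makes this positive (`cfE_pos`), so it is `|qₙ α - pₙ|`. -/
noncomputable def cfE (α : ℝ) (n : ℕ) : ℝ :=
  (-1) ^ n * ((cfQ α n : ℝ) * α - (cfP α n : ℝ))

lemma cfE_add_two (α : ℝ) (n : ℕ) :
    cfE α n = cfA α (n + 2) * cfE α (n + 1) + cfE α (n + 2) := by
  simp only [cfE, cfQ, cfP, pow_succ]
  push_cast
  ring

lemma cfP_mul_cfQ_sub (α : ℝ) (n : ℕ) :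
    (cfP α (n + 1) : ℤ) * cfQ α n - cfP α n * cfQ α (n + 1) = (-1) ^ n := by
  induction n with
  | zero => simp [cfP, cfQ]
  | succ n ih =>
    simp only [cfP, cfQ, pow_succ]
    push_cast
    linear_combination (-1 : ℤ) * ih

lemma cfQ_mul_cfE_add_eq_one (α : ℝ) (n : ℕ) :
    cfQ α (n + 1) * cfE α n + cfQ α n * cfE α (n + 1) = 1 := by
  have hdet : (cfP α (n + 1) : ℝ) * cfQ α n - cfP α n * cfQ α (n + 1) = (-1) ^ n := by
    exact_mod_cast cfP_mul_cfQ_sub α n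
  have hsign : ((-1 : ℝ) ^ n) ^ 2 = 1 := by rw [← pow_mul, pow_mul']; norm_num
  simp only [cfE, pow_succ]
  linear_combination (-1 : ℝ) ^ n * hdet + hsign

section convergents

variable {α : ℝ} (hirr : Irrational α) (hα : α ∈ Set.Ioo 0 1)
include hirr hα

lemma cfX_mem_Ioo (n : ℕ) : cfX α n ∈ Set.Ioo 0 1 := by
  cases n with
  | zero => exact hα
  | succ n =>
    have hne : cfX α (n + 1) ≠ 0 := (irrational_cfX hirr (n + 1)).ne_zero
    exact ⟨(Int.fract_nonneg _).lt_of_ne' hne, Int.fract_lt_one _⟩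

lemma one_le_cfA (n : ℕ) : 1 ≤ cfA α (n + 1) := by
  obtain ⟨h₀, h₁⟩ := cfX_mem_Ioo hirr hα n
  refine Nat.le_floor ?_
  rw [Nat.add_sub_cancel, Nat.cast_one, le_div_iff₀ h₀]
  linarith

lemma cfQ_pos (n : ℕ) : 0 < cfQ α n := by
  induction n using Nat.twoStepInduction with
  | zero => exact Nat.one_pos
  | one => exact one_le_cfA hirr hα 0
  | more n ih _ => simp only [cfQ]; positivity

lemma cfQ_succ_lt (n : ℕ) : cfQ α (n + 1) < cfQ α (n + 2) := by
  have := one_le_cfA hirr hα (n + 1)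
  have := cfQ_pos hirr hα n
  simp only [cfQ]
  nlinarith

lemma two_mul_cfQ_lt {n : ℕ} (ha : 2 ≤ cfA α (n + 2)) :
    2 * cfQ α (n + 1) < cfQ α (n + 2) := by
  have := cfQ_pos hirr hα n
  simp only [cfQ]
  nlinarith

lemma cfQ_mono : Monotone (cfQ α) := by
  refine monotone_nat_of_le_succ fun n => ?_
  cases n with
  | zero => exact one_le_cfA hirr hα 0
  | succ n => exact (cfQ_succ_lt hirr hα n).le

lemma two_le_cfQ_succ {n : ℕ} (hn : 1 ≤ n ∨ (n = 0 ∧ α < 1 / 2)) : 2 ≤ cfQ α (n + 1) := by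
  rcases hn with hn | ⟨rfl, hhalf⟩
  · obtain ⟨k, rfl⟩ := Nat.exists_eq_add_of_le' hn
    have := cfQ_pos hirr hα (k + 1)
    have := cfQ_succ_lt hirr hα k
    show 2 ≤ cfQ α (k + 2)
    omega
  · exact Nat.le_floor (by rw [cfX, le_div_iff₀ hα.1]; push_cast; linarith)

lemma four_mul_sq_sub_lt_cfQ_sq_sub {n m : ℕ} (ha : 2 ≤ cfA α (n + 2)) (hm : n + 1 < m) :
    4 * ((cfQ α (n + 1) : ℝ) ^ 2 - (cfQ α n : ℝ) ^ 2) < (cfQ α m : ℝ) ^ 2 - (cfQ α n : ℝ) ^ 2 := by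
  have hqm : 2 * cfQ α (n + 1) < cfQ α m :=
    (two_mul_cfQ_lt hirr hα ha).trans_le (cfQ_mono hirr hα hm)
  have hqm' : 2 * (cfQ α (n + 1) : ℝ) < cfQ α m := by exact_mod_cast hqm
  have hqn : (0 : ℝ) < cfQ α n := by exact_mod_cast cfQ_pos hirr hα n
  nlinarith

lemma cfE_succ (n : ℕ) : cfE α (n + 1) = cfX α (n + 1) * cfE α n := by
  induction n with
  | zero =>
    rw [cfX_succ (show 0 ≤ cfX α 0 from hα.1.le)]
    simp only [cfE, cfQ, cfP, cfX]
    field_simp [hα.1.ne']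
    ring
  | succ n ih =>
    have hx := cfX_mem_Ioo hirr hα (n + 1)
    have hrec := cfE_add_two α n
    rw [ih] at hrec
    show cfE α (n + 2) = _
    rw [cfX_succ hx.1.le, ih, sub_mul, one_div, inv_mul_cancel_left₀ hx.1.ne']
    linear_combination -hrec

lemma cfE_pos (n : ℕ) : 0 < cfE α n := by
  induction n with
  | zero => simpa [cfE, cfQ, cfP] using hα.1
  | succ n ih => rw [cfE_succ hirr hα]; exact mul_pos (cfX_mem_Ioo hirr hα _).1 ih

lemma cfE_strictAnti : StrictAnti (cfE α) := by
  refine strictAnti_nat_of_succ_lt fun n => ?_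
  rw [cfE_succ hirr hα]
  exact mul_lt_of_lt_one_left (cfE_pos hirr hα n) (cfX_mem_Ioo hirr hα _).2

lemma cfE_lt_half {n : ℕ} (hq : 2 ≤ cfQ α (n + 1)) : cfE α n < 1 / 2 := by
  have hid := cfQ_mul_cfE_add_eq_one α n
  have hq' : (2 : ℝ) ≤ cfQ α (n + 1) := by exact_mod_cast hq
  have := cfE_pos hirr hα n
  have := cfE_pos hirr hα (n + 1)
  have : (0 : ℝ) < cfQ α n := by exact_mod_cast cfQ_pos hirr hα n
  nlinarith

lemma cfDelta_eq {n : ℕ} (h : cfE α n < 1 / 2) : cfDelta α n = 4 * sin (π * cfE α n) ^ 2 := by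
  have habs : |(cfQ α n : ℝ) * α - (cfP α n : ℤ)| = cfE α n := by
    rw [← abs_of_pos (cfE_pos hirr hα n), cfE, abs_mul, abs_pow, abs_neg, abs_one, one_pow,
      one_mul, Int.cast_natCast]
  rw [cfDelta, intDist_eq_abs_sub _ (habs ▸ h), habs]

lemma cfDelta_pos {n : ℕ} (h : cfE α n < 1 / 2) : 0 < cfDelta α n := by
  rw [cfDelta_eq hirr hα h]
  have := cfE_pos hirr hα n
  have : 0 < sin (π * cfE α n) := sin_pos_of_pos_of_lt_pi (by positivity) (by nlinarith [pi_pos])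
  positivity

lemma cfDelta_lt_cfDelta {n k : ℕ} (h : cfE α n < 1 / 2) (hnk : n < k) :
    cfDelta α k < cfDelta α n := by
  have hek := cfE_strictAnti hirr hα hnk
  rw [cfDelta_eq hirr hα h, cfDelta_eq hirr hα (hek.trans h)]
  have := cfE_pos hirr hα k
  have := sin_sq_lt_sin_sq (x := π * cfE α k) (y := π * cfE α n) (by positivity)
    (by gcongr) (by nlinarith [pi_pos])
  linarith

lemma cfDelta_sub_lt_two_mul_sub {n m : ℕ} (h : cfE α n < 1 / 2) (ha : 2 ≤ cfA α (n + 2))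
    (hm : n + 1 < m) : cfDelta α n - cfDelta α m < 2 * (cfDelta α n - cfDelta α (n + 1)) := by
  have he₁ : 2 * cfE α (n + 1) < cfE α n := by
    have ha' : (2 : ℝ) ≤ cfA α (n + 2) := by exact_mod_cast ha
    have := cfE_pos hirr hα (n + 1)
    have := cfE_pos hirr hα (n + 2)
    nlinarith [cfE_add_two α n]
  have hδ₁ : 2 * cfDelta α (n + 1) < cfDelta α n := by
    rw [cfDelta_eq hirr hα h, cfDelta_eq hirr hα (by linarith)]
    have := two_mul_sin_sq_lt_sin_sq (t := π * cfE α (n + 1)) (s := π * cfE α n)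
      (by have := cfE_pos hirr hα (n + 1); positivity) (by nlinarith [pi_pos])
      (by nlinarith [pi_pos])
    linarith
  have hδm := cfDelta_pos hirr hα ((cfE_strictAnti hirr hα (by omega : n < m)).trans h)
  linarith

end convergents

/-- If `n ≥ 1` (or `n = 0` and `α < 1/2`) and `a_{n+2} ≥ 2`, then
`r_{n,n+1} < r_{n,m}` for every `m > n + 1`. -/
theorem rCross_min_of_two_le (α : ℝ) (hirr : Irrational α)
    (hα : α ∈ Set.Ioo (0 : ℝ) 1)
    (n : ℕ) (hn : 1 ≤ n ∨ (n = 0 ∧ α < 1 / 2))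
    (ha : 2 ≤ cfA α (n + 2)) :
    ∀ m : ℕ, n + 1 < m → rCross α n (n + 1) < rCross α n m := by
  intro m hm
  have he : cfE α n < 1 / 2 := cfE_lt_half hirr hα (two_le_cfQ_succ hirr hα hn)
  have hq : (cfQ α n : ℝ) ^ 2 ≤ (cfQ α (n + 1) : ℝ) ^ 2 := by
    gcongr; exact cfQ_mono hirr hα n.le_succ
  have hq₄ := four_mul_sq_sub_lt_cfQ_sq_sub hirr hα ha hm
  have hδ := cfDelta_sub_lt_two_mul_sub hirr hα he ha hm
  have hδm := cfDelta_lt_cfDelta hirr hα he (by omega : n < m)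
  exact sqrt_div_lt_sqrt_div two_pos (sub_nonneg.2 hq) (by linarith) hδ.le (sub_pos.2 hδm)
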